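/- Let Γ = ⟨α, β⟩ with α, β coprime, 2 ≤ α < β, and let Δ be a Γ-semimodule whose minimal system of generators has exactly n + 1 ≥ 2 elements. Then the iterated syzygy Syz^(n+1)(Δ) is isomorphic to Δ, i.e. there exists c ∈ ℤ such that Syz^(n+1)(Δ) = c + Δ; in other words, the sequence of semimodule syzygies Syz^(k)(Δ), k ∈ ℕ, is periodic up to isomorphism with period n + 1. -/

import Mathlib

/-- The numerical semigroup `⟨α, β⟩ = {pα + qβ : p, q ∈ ℕ}`, viewed inside `ℤ`. -/
def Gamma (α β : ℕ) : Set ℤ := {x : ℤ | ∃ p q : ℕ, x = (p : ℤ) * α + (q : ℤ) * β}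

/-- The dual `Δ* = {c ∈ ℤ : c + Δ ⊆ ⟨α,β⟩}` of an `⟨α,β⟩`-semimodule. -/
def dualSet (α β : ℕ) (Δ : Set ℤ) : Set ℤ := {c : ℤ | ∀ x ∈ Δ, c + x ∈ Gamma α β}

/-- The minimal system of generators of an `⟨α,β⟩`-semimodule `Δ`: those `x ∈ Δ`
which cannot be written as `y + γ` with `y ∈ Δ` and `0 ≠ γ ∈ ⟨α,β⟩`. -/
def minGenSet (α β : ℕ) (Δ : Set ℤ) : Set ℤ :=
  {x ∈ Δ | ∀ γ ∈ Gamma α β, γ ≠ 0 → x - γ ∉ Δ}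

/-- The syzygy of an `⟨α,β⟩`-semimodule `Δ` with minimal system of generators `E`:
`Syz(Δ) = ⋃_{i,i' ∈ E, i ≠ i'} ((i + Γ) ∩ (i' + Γ))`. -/
def Syz (α β : ℕ) (Δ : Set ℤ) : Set ℤ :=
  ⋃ i ∈ minGenSet α β Δ, ⋃ j ∈ minGenSet α β Δ, ⋃ (_ : i ≠ j),
    ((fun γ => i + γ) '' Gamma α β) ∩ ((fun γ => j + γ) '' Gamma α β)

/-!
Sort integers into the residue classes of `s * β` modulo `α`. A semimodule `Δ` is determined by
its profile `F`, where `F s` is the least element of `Δ` in the class of `s * β`; it satisfies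
`F (s + 1) ≤ F s + β`, and the minimal generators are the `F u` at the positions `u` where this
inequality is strict. In the class of `s`, the tower `F u + Γ` starts at `F u + (s - u) * β` for
the representative `u ∈ (s - α, s]`, and the least of these starts is `F s`; the least element of
the syzygy in that class is the second least start. Hence `Syz` keeps the positions and moves the
profile one position back: `Syz^[k]` has profile `F p + (s - p) * β`, where `p` is the `k`-th
position before the last position `≤ s`. With `n + 1` positions per period `α`, after `n + 1`
steps `p` has gone back exactly `α`, and the profile becomes `F + α * β`. As `Syz` commutes with
translations, the whole sequence of syzygies is periodic.
-/

open Set Function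

lemma Int.eq_of_dvd_sub_of_lt {m x y : ℤ} (h : m ∣ x - y) (h₁ : x - y < m) (h₂ : y - x < m) :
    x = y :=
  sub_eq_zero.mp (Int.eq_zero_of_abs_lt_dvd h (abs_sub_lt_iff.mpr ⟨h₁, h₂⟩))

section Gamma

variable {α β : ℕ} {x y k : ℤ}

lemma add_mem_Gamma (hx : x ∈ Gamma α β) (hy : y ∈ Gamma α β) : x + y ∈ Gamma α β := by
  obtain ⟨p, q, rfl⟩ := hx
  obtain ⟨p', q', rfl⟩ := hy
  exact ⟨p + p', q + q', by push_cast; ring⟩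

lemma mul_mem_Gamma (hk : 0 ≤ k) : k * β ∈ Gamma α β :=
  ⟨0, k.toNat, by simp [hk]⟩

lemma mem_Gamma_of_nonneg_of_dvd (hα : 0 < α) (hx : 0 ≤ x) (hdvd : (α : ℤ) ∣ x) :
    x ∈ Gamma α β := by
  obtain ⟨m, rfl⟩ := hdvd
  have hm : 0 ≤ m := nonneg_of_mul_nonneg_right hx (by exact_mod_cast hα)
  exact ⟨m.toNat, 0, by simp [hm, mul_comm]⟩

lemma le_of_mem_Gamma (hcop : Nat.Coprime α β) (hkα : k < α)
    (hdvd : (α : ℤ) ∣ x - k * β) (hx : x ∈ Gamma α β) : k * β ≤ x := by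
  obtain ⟨p, q, rfl⟩ := hx
  obtain ⟨m, hm⟩ : (α : ℤ) ∣ q - k := (Nat.isCoprime_iff_coprime.mpr hcop).dvd_of_dvd_mul_right
    ((hdvd.sub (dvd_mul_right (α : ℤ) p)).trans (dvd_of_eq (by ring)))
  have hm₀ : 0 ≤ m := by
    by_contra! h
    have : m ≤ -1 := by omega
    nlinarith [Int.natCast_nonneg q]
  have hkq : k ≤ q := by nlinarith [Int.natCast_nonneg α]
  nlinarith [Int.natCast_nonneg p, Int.natCast_nonneg α, Int.natCast_nonneg β]

lemma exists_dvd_sub_mul (hcop : Nat.Coprime α β) (x : ℤ) : ∃ s : ℤ, (α : ℤ) ∣ x - s * β := by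
  obtain ⟨u, v, huv⟩ := Nat.isCoprime_iff_coprime.mpr hcop
  exact ⟨x * v, x * u, by linear_combination -x * huv⟩

end Gamma

section Semimodule

variable {α β : ℕ} {Δ : Set ℤ}

lemma mem_minGenSet_iff (hα : 0 < α) (hβ : 0 < β)
    (hmod : ∀ x ∈ Δ, ∀ γ ∈ Gamma α β, x + γ ∈ Δ) {x : ℤ} :
    x ∈ minGenSet α β Δ ↔ x ∈ Δ ∧ x - α ∉ Δ ∧ x - β ∉ Δ := by
  refine ⟨fun ⟨hx, h⟩ => ⟨hx, h _ ⟨1, 0, by simp⟩ (by positivity),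
    h _ ⟨0, 1, by simp⟩ (by positivity)⟩, ?_⟩
  rintro ⟨hx, hxα, hxβ⟩
  refine ⟨hx, ?_⟩
  rintro _ ⟨p, q, rfl⟩ hγ hmem
  rcases p with _ | p
  · rcases q with _ | q
    · simp at hγ
    · exact hxβ (by convert hmod _ hmem _ ⟨0, q, rfl⟩ using 1; push_cast; ring)
  · exact hxα (by convert hmod _ hmem _ ⟨p, q, rfl⟩ using 1; push_cast; ring)

lemma mem_Syz_iff {y : ℤ} :
    y ∈ Syz α β Δ ↔ ∃ i ∈ minGenSet α β Δ, ∃ j ∈ minGenSet α β Δ,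
      i ≠ j ∧ y - i ∈ Gamma α β ∧ y - j ∈ Gamma α β := by
  simp only [Syz, mem_iUnion, mem_inter_iff, image_add_left, mem_preimage, exists_prop,
    neg_add_eq_sub]

lemma add_mem_Syz {y γ : ℤ} (hy : y ∈ Syz α β Δ) (hγ : γ ∈ Gamma α β) :
    y + γ ∈ Syz α β Δ := by
  obtain ⟨i, hi, j, hj, hij, hyi, hyj⟩ := mem_Syz_iff.mp hy
  refine mem_Syz_iff.mpr ⟨i, hi, j, hj, hij, ?_, ?_⟩
  · simpa [add_sub_right_comm] using add_mem_Gamma hyi hγ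
  · simpa [add_sub_right_comm] using add_mem_Gamma hyj hγ

lemma minGenSet_image_add_left (c : ℤ) (Δ : Set ℤ) :
    minGenSet α β ((c + ·) '' Δ) = (c + ·) '' minGenSet α β Δ := by
  ext x
  simp only [minGenSet, image_add_left, mem_preimage, mem_ofPred_eq, add_sub_assoc]

lemma Syz_image_add_left (c : ℤ) (Δ : Set ℤ) :
    Syz α β ((c + ·) '' Δ) = (c + ·) '' Syz α β Δ := by
  ext y
  rw [mem_Syz_iff, minGenSet_image_add_left, image_add_left, image_add_left, mem_preimage,
    mem_Syz_iff]
  simp only [mem_preimage]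
  constructor
  · rintro ⟨i, hi, j, hj, hij, hyi, hyj⟩
    exact ⟨-c + i, hi, -c + j, hj, by simpa using hij, by simpa using hyi, by simpa using hyj⟩
  · rintro ⟨i, hi, j, hj, hij, hyi, hyj⟩
    exact ⟨c + i, by simpa using hi, c + j, by simpa using hj, by simpa using hij,
      by rwa [show y - (c + i) = -c + y - i by ring],
      by rwa [show y - (c + j) = -c + y - j by ring]⟩

end Semimodule

-- Junk (`sSup ∅ = 0`) unless some element of `P` is at most `s`.
noncomputable def lastLE (P : Set ℤ) (s : ℤ) : ℤ := sSup (P ∩ Iic s)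

noncomputable def lastLT (P : Set ℤ) (s : ℤ) : ℤ := lastLE P (s - 1)

section lastLE

variable {P : Set ℤ} {s u : ℤ}

lemma isGreatest_lastLE (hu : u ∈ P) (hus : u ≤ s) : IsGreatest (P ∩ Iic s) (lastLE P s) :=
  have hbdd : BddAbove (P ∩ Iic s) := ⟨s, fun _ h => h.2⟩
  ⟨Int.csSup_mem ⟨u, hu, hus⟩ hbdd, fun _ hv => le_csSup hbdd hv⟩

lemma lastLE_eq_self (hs : s ∈ P) : lastLE P s = s :=
  IsGreatest.csSup_eq ⟨⟨hs, mem_Iic.mpr le_rfl⟩, fun _ hv => hv.2⟩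

lemma isGreatest_lastLT (hu : u ∈ P) (hus : u < s) : IsGreatest (P ∩ Iio s) (lastLT P s) := by
  obtain ⟨⟨hmem, hle⟩, hmax⟩ := isGreatest_lastLE hu (show u ≤ s - 1 by omega)
  refine ⟨⟨hmem, by simp only [lastLT, mem_Iic, mem_Iio] at hle ⊢; omega⟩, fun v ⟨hv, hvs⟩ => ?_⟩
  exact hmax ⟨hv, by simp only [mem_Iic, mem_Iio] at hvs ⊢; omega⟩

lemma lastLE_eq_lastLT (hs : s ∉ P) (hu : u ∈ P) (hus : u < s) : lastLE P s = lastLT P s := by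
  obtain ⟨⟨hmem, hlt⟩, hmax⟩ := isGreatest_lastLT hu hus
  refine IsGreatest.csSup_eq ⟨⟨hmem, mem_Iic.mpr (le_of_lt hlt)⟩, fun v ⟨hv, hvs⟩ => hmax ⟨hv, ?_⟩⟩
  exact lt_of_le_of_ne (mem_Iic.mp hvs) (by rintro rfl; exact hs hv)

lemma lastLE_add_of_periodic {p : ℤ} (hP : ∀ v, v + p ∈ P ↔ v ∈ P) (hu : u ∈ P) (hus : u ≤ s) :
    lastLE P (s + p) = lastLE P s + p := by
  obtain ⟨⟨hmem, hle⟩, hmax⟩ := isGreatest_lastLE hu hus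
  refine IsGreatest.csSup_eq ⟨⟨(hP _).mpr hmem, by simp only [mem_Iic] at hle ⊢; omega⟩, ?_⟩
  rintro v ⟨hv, hvs⟩
  have := hmax ⟨(hP (v - p)).mp (by rwa [sub_add_cancel]), by simp only [mem_Iic] at hvs ⊢; omega⟩
  omega

lemma iterate_lastLT_ncard {a : ℤ} (ha : a ∈ P) (hs : s ∈ P) (has : a ≤ s) :
    (lastLT P)^[(P ∩ Ioc a s).ncard] s = a := by
  suffices ∀ k : ℕ, ∀ s ∈ P, a ≤ s → (P ∩ Ioc a s).ncard = k → (lastLT P)^[k] s = a from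
    this _ s hs has rfl
  intro k
  induction k with
  | zero =>
    intro s hs has hk
    rw [ncard_eq_zero ((finite_Ioc a s).inter_of_right P)] at hk
    obtain rfl | hlt := eq_or_lt_of_le has
    · rfl
    · exact absurd (hk ▸ ⟨hs, hlt, le_rfl⟩ : s ∈ (∅ : Set ℤ)) (notMem_empty s)
  | succ k ih =>
    intro s hs has hk
    have has' : a < s := lt_of_le_of_ne has (by rintro rfl; simp at hk)
    obtain ⟨⟨htP, hts⟩, htmax⟩ := isGreatest_lastLT ha has'
    have hat : a ≤ lastLT P s := htmax ⟨ha, has'⟩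
    have hsplit : P ∩ Ioc a s = insert s (P ∩ Ioc a (lastLT P s)) := by
      ext v
      simp only [mem_inter_iff, mem_Ioc, mem_insert_iff]
      constructor
      · rintro ⟨hv, hav, hvs⟩
        rcases eq_or_lt_of_le hvs with rfl | hlt
        · exact Or.inl rfl
        · exact Or.inr ⟨hv, hav, htmax ⟨hv, hlt⟩⟩
      · rintro (rfl | ⟨hv, hav, hvt⟩)
        · exact ⟨hs, has', le_rfl⟩
        · exact ⟨hv, hav, hvt.trans (le_of_lt hts)⟩
    have hsnot : s ∉ P ∩ Ioc a (lastLT P s) := fun h => absurd (h.2.2.trans_lt hts) (lt_irrefl s)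
    rw [hsplit, ncard_insert_of_notMem hsnot ((finite_Ioc _ _).inter_of_right P)] at hk
    rw [iterate_succ_apply]
    exact ih _ htP hat (by omega)

lemma sub_lt_lastLT {p : ℤ} (h : 1 < (P ∩ Ioc (s - p) s).ncard) : s - p < lastLT P s := by
  obtain ⟨u, ⟨hu, hu₁, hu₂⟩, hus⟩ := exists_ne_of_one_lt_ncard h s
  exact hu₁.trans_le ((isGreatest_lastLT hu (lt_of_le_of_ne hu₂ hus)).2
    ⟨hu, lt_of_le_of_ne hu₂ hus⟩)

end lastLE

/-- `F s` is the least element of a semimodule in the residue class of `s * β` modulo `α`. -/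
structure IsProfile (α β : ℕ) (F : ℤ → ℤ) : Prop where
  periodic : Periodic F α
  dvd_sub_mul : ∀ s, (α : ℤ) ∣ F s - s * β
  le_add : ∀ s, F (s + 1) ≤ F s + β

def profileSet (α : ℕ) (F : ℤ → ℤ) : Set ℤ := {x | ∃ s, F s ≤ x ∧ (α : ℤ) ∣ x - F s}

/-- The classes `s` whose least element `F s` is a minimal generator. -/
def genPos (β : ℕ) (F : ℤ → ℤ) : Set ℤ := {s | F s < F (s - 1) + β}

lemma profileSet_add_const (α : ℕ) (F : ℤ → ℤ) (c : ℤ) :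
    profileSet α (fun s => F s + c) = (c + ·) '' profileSet α F := by
  ext x
  simp only [profileSet, image_add_left, mem_preimage, mem_ofPred_eq]
  exact exists_congr fun s =>
    and_congr (by omega) (by rw [show x - (F s + c) = -c + x - F s by ring])

namespace IsProfile

variable {α β : ℕ} {F : ℤ → ℤ} (hF : IsProfile α β F)
include hF

lemma eq_of_dvd_sub {s t : ℤ} (h : (α : ℤ) ∣ s - t) : F s = F t := by
  obtain ⟨k, hk⟩ := h
  rw [show s = t + k * α by linarith]
  exact hF.periodic.int_mul k t

lemma dvd_sub_of_eq (hcop : Nat.Coprime α β) {s t : ℤ} (h : F s = F t) : (α : ℤ) ∣ s - t :=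
  (Nat.isCoprime_iff_coprime.mpr hcop).dvd_of_dvd_mul_right
    (((hF.dvd_sub_mul t).sub (hF.dvd_sub_mul s)).trans (dvd_of_eq (by rw [h]; ring)))

lemma mem_profileSet_iff (hcop : Nat.Coprime α β) {x s : ℤ} (hx : (α : ℤ) ∣ x - s * β) :
    x ∈ profileSet α F ↔ F s ≤ x := by
  refine ⟨fun ⟨t, hle, hdvd⟩ => ?_, fun hle => ⟨s, hle, ?_⟩⟩
  · have hst : (α : ℤ) ∣ (s - t) * β :=
      ((hdvd.add (hF.dvd_sub_mul t)).sub hx).trans (dvd_of_eq (by ring))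
    rwa [hF.eq_of_dvd_sub ((Nat.isCoprime_iff_coprime.mpr hcop).dvd_of_dvd_mul_right hst)]
  · exact (hx.sub (hF.dvd_sub_mul s)).trans (dvd_of_eq (by ring))

lemma le_add_mul {s t : ℤ} (hts : t ≤ s) : F s ≤ F t + (s - t) * β := by
  induction s, hts using Int.leInduction with
  | base => simp
  | succ s _ ih => linarith [hF.le_add s]

lemma add_mem_profileSet {x γ : ℤ} (hx : x ∈ profileSet α F) (hγ : γ ∈ Gamma α β) :
    x + γ ∈ profileSet α F := by
  obtain ⟨s, hle, hdvd⟩ := hx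
  obtain ⟨p, q, rfl⟩ := hγ
  refine ⟨s + q, ?_, ?_⟩
  · have := hF.le_add_mul (show s ≤ s + q by omega)
    nlinarith [Int.natCast_nonneg p, Int.natCast_nonneg α]
  · exact (((hdvd.add (dvd_mul_left (α : ℤ) p)).add (hF.dvd_sub_mul s)).sub
      (hF.dvd_sub_mul (s + q))).trans (dvd_of_eq (by ring))

lemma eq_add_mul {s t : ℤ} (hts : t ≤ s) (hflat : ∀ u ∈ Ioc t s, u ∉ genPos β F) :
    F s = F t + (s - t) * β := by
  induction s, hts using Int.leInduction with
  | base => simp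
  | succ s hts ih =>
    have hs : s + 1 ∉ genPos β F := hflat _ ⟨by omega, le_rfl⟩
    simp only [genPos, mem_ofPred_eq, add_sub_cancel_right, not_lt] at hs
    have := ih fun u hu => hflat u ⟨hu.1, by linarith [hu.2]⟩
    linarith [hF.le_add s]

lemma mem_genPos_add_iff (u : ℤ) : u + α ∈ genPos β F ↔ u ∈ genPos β F := by
  simp only [genPos, mem_ofPred_eq, hF.periodic u, add_sub_right_comm, hF.periodic (u - 1)]

lemma exists_mem_genPos_le (hα : 0 < α) (hβ : 0 < β) (s : ℤ) : ∃ u ∈ genPos β F, u ≤ s := by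
  -- Otherwise `F` would grow by `α * β` over a period.
  by_contra! h
  have := hF.eq_add_mul (show s - α ≤ s by omega) fun u hu hmem => (h u hmem).not_ge hu.2
  rw [hF.periodic.sub_eq] at this
  nlinarith

lemma isGreatest_lastLE (hα : 0 < α) (hβ : 0 < β) (s : ℤ) :
    IsGreatest (genPos β F ∩ Iic s) (lastLE (genPos β F) s) :=
  have ⟨_, hu, hus⟩ := hF.exists_mem_genPos_le hα hβ s
  _root_.isGreatest_lastLE hu hus

lemma eq_lastLE_add_mul (hα : 0 < α) (hβ : 0 < β) (s : ℤ) :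
    F s = F (lastLE (genPos β F) s) + (s - lastLE (genPos β F) s) * β := by
  obtain ⟨⟨-, hle⟩, hmax⟩ := hF.isGreatest_lastLE hα hβ s
  exact hF.eq_add_mul hle fun u hu hmem => (hmax ⟨hmem, hu.2⟩).not_gt hu.1

lemma exists_mem_genPos_Ioc_eq (hα : 0 < α) {u : ℤ} (hu : u ∈ genPos β F) (s : ℤ) :
    ∃ w ∈ genPos β F ∩ Ioc (s - α) s, F w = F u := by
  have hα' : (0 : ℤ) < α := by exact_mod_cast hα
  set w := toIocMod hα' (s - α) u
  obtain ⟨hw₁, hw₂⟩ := toIocMod_mem_Ioc hα' (s - α) u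
  have hdvd : (α : ℤ) ∣ w - u := ⟨-toIocDiv hα' (s - α) u, by
    have := self_sub_toIocMod hα' (s - α) u
    rw [smul_eq_mul] at this
    linarith⟩
  have hw : w ∈ genPos β F := by
    have h1 : F (w - 1) = F (u - 1) := hF.eq_of_dvd_sub (by simpa using hdvd)
    simpa only [genPos, mem_ofPred_eq, h1, hF.eq_of_dvd_sub hdvd] using hu
  exact ⟨w, ⟨hw, hw₁, by linarith⟩, hF.eq_of_dvd_sub hdvd⟩

lemma minGenSet_profileSet (hα : 0 < α) (hβ : 0 < β) (hcop : Nat.Coprime α β) (s : ℤ) :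
    minGenSet α β (profileSet α F) = F '' (genPos β F ∩ Ioc (s - α) s) := by
  ext x
  rw [mem_minGenSet_iff hα hβ fun _ hx _ hγ => hF.add_mem_profileSet hx hγ]
  constructor
  · rintro ⟨⟨t, hle, hdvd⟩, hxα, hxβ⟩
    have hcls : (α : ℤ) ∣ x - t * β := (hdvd.add (hF.dvd_sub_mul t)).trans (dvd_of_eq (by ring))
    have hlt : x - α < F t := not_le.mp fun h => hxα <|
      (hF.mem_profileSet_iff hcop ((hcls.sub (dvd_refl _)).trans (dvd_of_eq (by ring)))).mpr h
    obtain rfl : x = F t := Int.eq_of_dvd_sub_of_lt hdvd (by omega) (by omega)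
    have hlt' : F t - β < F (t - 1) := not_le.mp fun h => hxβ <|
      (hF.mem_profileSet_iff hcop ((hF.dvd_sub_mul t).trans (dvd_of_eq (by ring)))).mpr h
    exact hF.exists_mem_genPos_Ioc_eq hα (show F t < F (t - 1) + β by omega) s
  · rintro ⟨u, ⟨hu, -⟩, rfl⟩
    refine ⟨⟨u, le_rfl, by simp⟩, fun h => ?_, fun h => ?_⟩
    · have := (hF.mem_profileSet_iff hcop (s := u)
        (((hF.dvd_sub_mul u).sub (dvd_refl _)).trans (dvd_of_eq (by ring)))).mp h
      omega
    · have := (hF.mem_profileSet_iff hcop (s := u - 1)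
        ((hF.dvd_sub_mul u).trans (dvd_of_eq (by ring)))).mp h
      simp only [genPos, mem_ofPred_eq] at hu
      omega

lemma ncard_minGenSet (hα : 0 < α) (hβ : 0 < β) (hcop : Nat.Coprime α β) (s : ℤ) :
    (minGenSet α β (profileSet α F)).ncard = (genPos β F ∩ Ioc (s - α) s).ncard := by
  rw [hF.minGenSet_profileSet hα hβ hcop s]
  refine InjOn.ncard_image fun u ⟨_, hu₁, hu₂⟩ v ⟨_, hv₁, hv₂⟩ huv => ?_
  exact Int.eq_of_dvd_sub_of_lt (hF.dvd_sub_of_eq hcop huv) (by omega) (by omega)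

end IsProfile

theorem exists_isProfile {α β : ℕ} (hα : 0 < α) (hcop : Nat.Coprime α β) {Δ : Set ℤ}
    (hne : Δ.Nonempty) (hbdd : ∃ m : ℤ, ∀ x ∈ Δ, m ≤ x)
    (hmod : ∀ x ∈ Δ, ∀ γ ∈ Gamma α β, x + γ ∈ Δ) :
    ∃ F, IsProfile α β F ∧ Δ = profileSet α F := by
  have hcls : ∀ s : ℤ, ∃ x, x ∈ Δ ∧ (α : ℤ) ∣ x - s * β := by
    intro s
    obtain ⟨x, hx⟩ := hne
    obtain ⟨t, ht⟩ := exists_dvd_sub_mul hcop x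
    refine ⟨x + (s - t) % α * β, hmod x hx _ (mul_mem_Gamma (Int.emod_nonneg _ (by omega))), ?_⟩
    rw [Int.emod_def]
    exact (ht.sub ((dvd_mul_right (α : ℤ) ((s - t) / α)).mul_right β)).trans (dvd_of_eq (by ring))
  obtain ⟨m, hm⟩ := hbdd
  choose F hF hFle using fun s => Int.exists_least_of_bdd ⟨m, fun x hx => hm x hx.1⟩ (hcls s)
  have hprof : IsProfile α β F :=
    { periodic := fun s => le_antisymm
        (hFle _ _ ⟨(hF s).1, ((hF s).2.sub (dvd_mul_right (α : ℤ) β)).trans (dvd_of_eq (by ring))⟩)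
        (hFle _ _ ⟨(hF (s + α)).1,
          ((hF (s + α)).2.add (dvd_mul_right (α : ℤ) β)).trans (dvd_of_eq (by ring))⟩)
      dvd_sub_mul := fun s => (hF s).2
      le_add := fun s => hFle _ _
        ⟨hmod _ (hF s).1 _ ⟨0, 1, by simp⟩, (hF s).2.trans (dvd_of_eq (by ring))⟩ }
  refine ⟨F, hprof, Set.ext fun x => ⟨fun hx => ?_, fun ⟨s, hle, hdvd⟩ => ?_⟩⟩
  · obtain ⟨s, hs⟩ := exists_dvd_sub_mul hcop x
    exact (hprof.mem_profileSet_iff hcop hs).mpr (hFle s x ⟨hx, hs⟩)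
  · simpa using hmod _ (hF s).1 _ (mem_Gamma_of_nonneg_of_dvd hα (sub_nonneg.mpr hle) hdvd)

/-- The second least start `F u + (s - u) * β` of a generator's tower in the class of `s`:
the tower of the last position `b ≤ s` is replaced by the one passing through `F (b - 1)`. -/
noncomputable def syzProfile (β : ℕ) (F : ℤ → ℤ) (s : ℤ) : ℤ :=
  F (lastLE (genPos β F) s - 1) + (s - lastLE (genPos β F) s + 1) * β

namespace IsProfile

variable {α β : ℕ} {F : ℤ → ℤ} (hF : IsProfile α β F)
include hF

lemma syz (hα : 0 < α) (hβ : 0 < β) : IsProfile α β (syzProfile β F) where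
  periodic s := by
    obtain ⟨u, hu, hus⟩ := hF.exists_mem_genPos_le hα hβ s
    simp only [syzProfile]
    rw [lastLE_add_of_periodic hF.mem_genPos_add_iff hu hus, add_sub_right_comm, hF.periodic]
    ring
  dvd_sub_mul s :=
    (hF.dvd_sub_mul (lastLE (genPos β F) s - 1)).trans (dvd_of_eq (by simp only [syzProfile]; ring))
  le_add s := by
    obtain ⟨⟨-, hb⟩, -⟩ := hF.isGreatest_lastLE hα hβ s
    rw [mem_Iic] at hb
    by_cases hs : s + 1 ∈ genPos β F
    · have := hF.le_add_mul (show lastLE (genPos β F) s - 1 ≤ s by omega)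
      simp only [syzProfile, lastLE_eq_self hs, add_sub_cancel_right]
      linarith
    · obtain ⟨u, hu, hus⟩ := hF.exists_mem_genPos_le hα hβ s
      simp only [syzProfile, lastLE_eq_lastLT hs hu (by omega), lastLT, add_sub_cancel_right]
      linarith

lemma genPos_syzProfile (hα : 0 < α) (hβ : 0 < β) : genPos β (syzProfile β F) = genPos β F := by
  ext s
  obtain ⟨u, hu, hus⟩ := hF.exists_mem_genPos_le hα hβ (s - 1)
  by_cases hs : s ∈ genPos β F
  · have hflat := hF.eq_lastLE_add_mul hα hβ (s - 1)
    have hb : F (lastLE (genPos β F) (s - 1)) < F (lastLE (genPos β F) (s - 1) - 1) + β :=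
      (hF.isGreatest_lastLE hα hβ _).1.1
    refine iff_of_true ?_ hs
    show syzProfile β F s < syzProfile β F (s - 1) + β
    simp only [syzProfile, lastLE_eq_self hs]
    linarith
  · refine iff_of_false ?_ hs
    simp only [genPos, mem_ofPred_eq, not_lt]
    simp only [syzProfile, lastLE_eq_lastLT hs hu (by omega), lastLT]
    linarith

lemma add_mul_le_of_sub_mem_Gamma (hcop : Nat.Coprime α β) {w s y : ℤ} (hw : w ∈ Ioc (s - α) s)
    (hy : y - F w ∈ Gamma α β) (hys : (α : ℤ) ∣ y - s * β) : F w + (s - w) * β ≤ y := by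
  have := le_of_mem_Gamma hcop (k := s - w) (by linarith [hw.1])
    ((hys.sub (hF.dvd_sub_mul w)).trans (dvd_of_eq (by ring))) hy
  linarith

lemma syzProfile_le_of_mem_Syz (hα : 0 < α) (hβ : 0 < β) (hcop : Nat.Coprime α β) {y s : ℤ}
    (hy : y ∈ Syz α β (profileSet α F)) (hys : (α : ℤ) ∣ y - s * β) : syzProfile β F s ≤ y := by
  obtain ⟨i, hi, j, hj, hij, hyi, hyj⟩ := mem_Syz_iff.mp hy
  rw [hF.minGenSet_profileSet hα hβ hcop s] at hi hj
  obtain ⟨u, ⟨hu, hus⟩, rfl⟩ := hi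
  obtain ⟨v, ⟨hv, hvs⟩, rfl⟩ := hj
  set b := lastLE (genPos β F) s
  obtain ⟨w, hw, hws, hwb, hyw⟩ : ∃ w ∈ genPos β F, w ∈ Ioc (s - α) s ∧ w ≠ b ∧
      y - F w ∈ Gamma α β := by
    by_cases hub : u = b
    · exact ⟨v, hv, hvs, fun hvb => hij (by rw [hub, hvb]), hyj⟩
    · exact ⟨u, hu, hus, hub, hyi⟩
  have hwb' : w ≤ b - 1 := by
    have := (hF.isGreatest_lastLE hα hβ s).2 ⟨hw, hws.2⟩
    omega
  calc syzProfile β F s = F (b - 1) + (s - b + 1) * β := rfl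
    _ ≤ F w + (b - 1 - w) * β + (s - b + 1) * β := by gcongr; exact hF.le_add_mul hwb'
    _ = F w + (s - w) * β := by ring
    _ ≤ y := hF.add_mul_le_of_sub_mem_Gamma hcop hws hyw hys

lemma syzProfile_mem_Syz (hα : 0 < α) (hβ : 0 < β) (hcop : Nat.Coprime α β)
    (htwo : ∀ s, 1 < (genPos β F ∩ Ioc (s - α) s).ncard) (s : ℤ) :
    syzProfile β F s ∈ Syz α β (profileSet α F) := by
  obtain ⟨⟨hb, hbs⟩, -⟩ := hF.isGreatest_lastLE hα hβ s
  set b := lastLE (genPos β F) s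
  obtain ⟨⟨ha, hab⟩, -⟩ := hF.isGreatest_lastLE hα hβ (b - 1)
  set a := lastLE (genPos β F) (b - 1)
  have hab' : b - α < a := sub_lt_lastLT (htwo b)
  have hflat : F (b - 1) = F a + (b - 1 - a) * β := hF.eq_lastLE_add_mul hα hβ (b - 1)
  rw [mem_Iic] at hbs hab
  have hmin := hF.minGenSet_profileSet hα hβ hcop b
  refine mem_Syz_iff.mpr ⟨F b, hmin ▸ ⟨b, ⟨hb, by omega, le_rfl⟩, rfl⟩,
    F a, hmin ▸ ⟨a, ⟨ha, hab', by omega⟩, rfl⟩, fun h => ?_, ?_, ?_⟩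
  · have := Int.eq_of_dvd_sub_of_lt (hF.dvd_sub_of_eq hcop h) (by omega) (by omega)
    omega
  · have hdrop : F (b - 1) + β - F b ∈ Gamma α β := by
      have := hF.le_add (b - 1)
      rw [sub_add_cancel] at this
      exact mem_Gamma_of_nonneg_of_dvd hα (by linarith)
        (((hF.dvd_sub_mul (b - 1)).sub (hF.dvd_sub_mul b)).trans (dvd_of_eq (by ring)))
    rw [show syzProfile β F s - F b = F (b - 1) + β - F b + (s - b) * β by
      simp only [syzProfile]; ring]
    exact add_mem_Gamma hdrop (mul_mem_Gamma (by omega))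
  · rw [show syzProfile β F s - F a = (s - a) * β by simp only [syzProfile]; rw [hflat]; ring]
    exact mul_mem_Gamma (by omega)

lemma Syz_profileSet (hα : 0 < α) (hβ : 0 < β) (hcop : Nat.Coprime α β)
    (htwo : ∀ s, 1 < (genPos β F ∩ Ioc (s - α) s).ncard) :
    Syz α β (profileSet α F) = profileSet α (syzProfile β F) := by
  ext y
  constructor
  · intro hy
    obtain ⟨s, hs⟩ := exists_dvd_sub_mul hcop y
    exact ((hF.syz hα hβ).mem_profileSet_iff hcop hs).mpr
      (hF.syzProfile_le_of_mem_Syz hα hβ hcop hy hs)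
  · rintro ⟨s, hle, hdvd⟩
    simpa using add_mem_Syz (hF.syzProfile_mem_Syz hα hβ hcop htwo s)
      (mem_Gamma_of_nonneg_of_dvd hα (sub_nonneg.mpr hle) hdvd)

lemma iterate_syz (hα : 0 < α) (hβ : 0 < β) (k : ℕ) : IsProfile α β ((syzProfile β)^[k] F) := by
  induction k with
  | zero => exact hF
  | succ k ih => rw [iterate_succ_apply']; exact ih.syz hα hβ

lemma genPos_iterate_syzProfile (hα : 0 < α) (hβ : 0 < β) (k : ℕ) :
    genPos β ((syzProfile β)^[k] F) = genPos β F := by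
  induction k with
  | zero => rfl
  | succ k ih => rw [iterate_succ_apply', (hF.iterate_syz hα hβ k).genPos_syzProfile hα hβ, ih]

lemma iterate_Syz_profileSet (hα : 0 < α) (hβ : 0 < β) (hcop : Nat.Coprime α β)
    (htwo : ∀ s, 1 < (genPos β F ∩ Ioc (s - α) s).ncard) (k : ℕ) :
    (Syz α β)^[k] (profileSet α F) = profileSet α ((syzProfile β)^[k] F) := by
  induction k with
  | zero => rfl
  | succ k ih =>
    rw [iterate_succ_apply', ih, iterate_succ_apply', (hF.iterate_syz hα hβ k).Syz_profileSet hα hβ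
      hcop (by rwa [hF.genPos_iterate_syzProfile hα hβ k])]

lemma iterate_syzProfile_apply (hα : 0 < α) (hβ : 0 < β) (k : ℕ) (s : ℤ) :
    (syzProfile β)^[k] F s = F ((lastLT (genPos β F))^[k] (lastLE (genPos β F) s)) +
      (s - (lastLT (genPos β F))^[k] (lastLE (genPos β F) s)) * β := by
  induction k generalizing s with
  | zero => exact hF.eq_lastLE_add_mul hα hβ s
  | succ k ih =>
    rw [iterate_succ_apply', syzProfile, hF.genPos_iterate_syzProfile hα hβ k, ih,
      iterate_succ_apply]
    rw [show lastLT (genPos β F) (lastLE (genPos β F) s) =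
      lastLE (genPos β F) (lastLE (genPos β F) s - 1) from rfl]
    ring

lemma iterate_syzProfile_eq_add (hα : 0 < α) (hβ : 0 < β) {n : ℕ}
    (hwin : ∀ s, (genPos β F ∩ Ioc (s - α) s).ncard = n + 1) :
    (syzProfile β)^[n + 1] F = fun s => F s + α * β := by
  funext s
  obtain ⟨⟨hb, -⟩, -⟩ := hF.isGreatest_lastLE hα hβ s
  have hback : (lastLT (genPos β F))^[n + 1] (lastLE (genPos β F) s) =
      lastLE (genPos β F) s - α := by
    rw [← hwin (lastLE (genPos β F) s)]
    exact iterate_lastLT_ncard ((hF.mem_genPos_add_iff _).mp (by rwa [sub_add_cancel])) hb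
      (by omega)
  rw [hF.iterate_syzProfile_apply hα hβ, hback, hF.periodic.sub_eq]
  conv_rhs => rw [hF.eq_lastLE_add_mul hα hβ s]
  ring

theorem iterate_Syz_profileSet_eq (hα : 0 < α) (hβ : 0 < β) (hcop : Nat.Coprime α β) {n : ℕ}
    (hn : 1 ≤ n) (hcard : (minGenSet α β (profileSet α F)).ncard = n + 1) :
    (Syz α β)^[n + 1] (profileSet α F) = (fun x => (α * β : ℤ) + x) '' profileSet α F := by
  have hwin : ∀ s, (genPos β F ∩ Ioc (s - α) s).ncard = n + 1 := fun s => by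
    rw [← hF.ncard_minGenSet hα hβ hcop s, hcard]
  rw [hF.iterate_Syz_profileSet hα hβ hcop (fun s => by rw [hwin s]; omega),
    hF.iterate_syzProfile_eq_add hα hβ hwin, profileSet_add_const]

end IsProfile

/-- For an `⟨α,β⟩`-semimodule `Δ` with exactly `n + 1 ≥ 2` minimal generators,
the iterated syzygy `Syz^(n+1)(Δ)` is isomorphic to `Δ`; in other words the
sequence `Syz^(k)(Δ)` is periodic up to isomorphism with period `n + 1`. -/
theorem syz_periodic (α β : ℕ)
    (hα : 2 ≤ α) (hαβ : α < β) (hcop : Nat.Coprime α β)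
    (Δ : Set ℤ) (hne : Δ.Nonempty) (hbdd : ∃ m : ℤ, ∀ x ∈ Δ, m ≤ x)
    (hmod : ∀ x ∈ Δ, ∀ γ ∈ Gamma α β, x + γ ∈ Δ)
    (n : ℕ) (hn : 1 ≤ n) (hgen : (minGenSet α β Δ).ncard = n + 1) :
    (∃ c : ℤ, (Syz α β)^[n + 1] Δ = (fun x => c + x) '' Δ) ∧
    ∀ k : ℕ, ∃ c : ℤ,
      (Syz α β)^[k + (n + 1)] Δ = (fun x => c + x) '' ((Syz α β)^[k] Δ) := by
  obtain ⟨F, hF, rfl⟩ := exists_isProfile (by omega) hcop hne hbdd hmod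
  have hperiod := hF.iterate_Syz_profileSet_eq (by omega) (by omega) hcop hn hgen
  refine ⟨⟨_, hperiod⟩, fun k => ⟨α * β, ?_⟩⟩
  rw [iterate_add_apply, hperiod]
  exact ((Commute.iterate_right (fun Δ => (Syz_image_add_left _ Δ).symm) k) _).symm
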